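/- Let G = G_l ⊗ G_r be a true twin composition, assume D_k(H) ≠ ∅ for each H ∈ {G, G_l, G_r} and each 0 ≤ k ≤ |TS(H)|, and assume Equation (2) holds for G_l and for G_r. Then α(G) = α(G_l) − β(G_r) if α(G_l) > β(G_r); α(G) = α(G_r) − β(G_l) if α(G_r) > β(G_l); and otherwise α(G) = |α(G_l) − α(G_r)| mod 2. -/

import Mathlib

/-- A finite simple graph on a subset of an ambient vertex type `α`,
together with a designated twin set `TS ⊆ verts`. -/
structure TSGraph (α : Type*) where
  verts : Finset α
  Adj : α → α → Prop
  symm : ∀ u v, Adj u v → Adj v u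
  irrefl : ∀ u, ¬ Adj u u
  adj_mem : ∀ u v, Adj u v → u ∈ verts ∧ v ∈ verts
  TS : Finset α
  TS_sub : TS ⊆ verts

namespace TSGraph

variable {α : Type*} [DecidableEq α]

/-- `f` encodes a perfect matching of the subgraph of `G` induced by `S`:
every vertex of `S` is paired with an adjacent vertex of `S`, involutively. -/
def IsPM (G : TSGraph α) (S : Finset α) (f : α → α) : Prop :=
  ∀ v ∈ S, f v ∈ S ∧ G.Adj v (f v) ∧ f (f v) = v

/-- `S ⊆ V(G)` dominates `V(G) − TS(G)` and, for some `X ⊆ S ∩ TS(G)` of size `k`,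
the subgraph induced by `S − X` has a perfect matching. -/
def Adm (G : TSGraph α) (k : ℕ) (S : Finset α) : Prop :=
  S ⊆ G.verts ∧
  (∀ v ∈ G.verts, v ∉ G.TS → v ∈ S ∨ ∃ u ∈ S, G.Adj u v) ∧
  ∃ X ⊆ S ∩ G.TS, X.card = k ∧ ∃ f, G.IsPM (S \ X) f

/-- Membership in the family `D_k(G)`: admissible of minimum cardinality. -/
def memD (G : TSGraph α) (k : ℕ) (S : Finset α) : Prop :=
  G.Adm k S ∧ ∀ S', G.Adm k S' → S.card ≤ S'.card

/-- `D_k(G) ≠ ∅`. -/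
def DkNonempty (G : TSGraph α) (k : ℕ) : Prop := ∃ S, G.memD k S

/-- `D_k(G) ≠ ∅` for all `0 ≤ k ≤ |TS(G)|`. -/
def AllDkNonempty (G : TSGraph α) : Prop := ∀ k ≤ G.TS.card, G.DkNonempty k

/-- `γ_k(G)`: the common cardinality of the members of `D_k(G)`. -/
noncomputable def gamma (G : TSGraph α) (k : ℕ) : ℕ :=
  sInf {n | ∃ S, G.Adm k S ∧ S.card = n}

/-- A paired-dominating set of `G`. -/
def IsPDS (G : TSGraph α) (D : Finset α) : Prop :=
  D ⊆ G.verts ∧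
  (∀ v ∈ G.verts, v ∈ D ∨ ∃ u ∈ D, G.Adj u v) ∧
  ∃ f, G.IsPM D f

/-- `γ_p(G)`: the paired-domination number. -/
noncomputable def gammaP (G : TSGraph α) : ℕ :=
  sInf {n | ∃ D, G.IsPDS D ∧ D.card = n}

/-- Membership in `D_p(G)`: minimum-cardinality paired-dominating sets. -/
def memDp (G : TSGraph α) (D : Finset α) : Prop :=
  G.IsPDS D ∧ D.card = G.gammaP

/-- `min(G) = min { γ_k(G) : 0 ≤ k ≤ |TS(G)| }`. -/
noncomputable def minVal (G : TSGraph α) : ℕ :=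
  sInf {n | ∃ k ≤ G.TS.card, G.gamma k = n}

/-- `α(G)`: the smallest `k` with `γ_k(G) = min(G)`. -/
noncomputable def alphaVal (G : TSGraph α) : ℕ :=
  sInf {k | k ≤ G.TS.card ∧ G.gamma k = G.minVal}

/-- `β(G)`: the largest `k` with `γ_k(G) = min(G)`. -/
noncomputable def betaVal (G : TSGraph α) : ℕ :=
  sSup {k | k ≤ G.TS.card ∧ G.gamma k = G.minVal}

/-- Membership in `Ψ(G)`: sets in some `D_k(G)` of cardinality `min(G)`. -/
def memPsi (G : TSGraph α) (D : Finset α) : Prop :=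
  (∃ k, k ≤ G.TS.card ∧ G.memD k D) ∧ D.card = G.minVal

/-- Equation (2) holds for `G`. -/
def Eq2Holds (G : TSGraph α) : Prop :=
  ∀ k ≤ G.TS.card,
    (k ≤ G.alphaVal → G.gamma k = G.minVal + G.alphaVal - k) ∧
    (G.betaVal ≤ k → G.gamma k = G.minVal + k - G.betaVal) ∧
    (G.alphaVal < k → k < G.betaVal → Even (k - G.alphaVal) → G.gamma k = G.minVal) ∧
    (G.alphaVal < k → k < G.betaVal → ¬ Even (k - G.alphaVal) → G.gamma k = G.minVal + 1)

/-- `G = Gl ⊗ Gr` (true twin composition). -/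
def IsTrueTwin (G Gl Gr : TSGraph α) : Prop :=
  Disjoint Gl.verts Gr.verts ∧
  G.verts = Gl.verts ∪ Gr.verts ∧
  (∀ u v, G.Adj u v ↔ Gl.Adj u v ∨ Gr.Adj u v ∨
    (u ∈ Gl.TS ∧ v ∈ Gr.TS) ∨ (u ∈ Gr.TS ∧ v ∈ Gl.TS)) ∧
  G.TS = Gl.TS ∪ Gr.TS

/-- `G = Gl ⊙ Gr` (false twin composition). -/
def IsFalseTwin (G Gl Gr : TSGraph α) : Prop :=
  Disjoint Gl.verts Gr.verts ∧
  G.verts = Gl.verts ∪ Gr.verts ∧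
  (∀ u v, G.Adj u v ↔ Gl.Adj u v ∨ Gr.Adj u v) ∧
  G.TS = Gl.TS ∪ Gr.TS

/-- `G = Gl ⊕ Gr` (attachment composition). -/
def IsAttach (G Gl Gr : TSGraph α) : Prop :=
  Disjoint Gl.verts Gr.verts ∧
  G.verts = Gl.verts ∪ Gr.verts ∧
  (∀ u v, G.Adj u v ↔ Gl.Adj u v ∨ Gr.Adj u v ∨
    (u ∈ Gl.TS ∧ v ∈ Gr.TS) ∨ (u ∈ Gr.TS ∧ v ∈ Gl.TS)) ∧
  G.TS = Gl.TS

/-- The twin-set graph `G` arises from a decomposition tree all of whose associated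
twin-set graphs satisfy the property `P`. -/
inductive FromDecompTree (P : TSGraph α → Prop) : TSGraph α → Prop where
  | single (G : TSGraph α) (v : α) (hv : G.verts = {v}) (hts : G.TS = {v})
      (hadj : ∀ u w, ¬ G.Adj u w) (hP : P G) : FromDecompTree P G
  | ttwin (G Gl Gr : TSGraph α) (hl : FromDecompTree P Gl) (hr : FromDecompTree P Gr)
      (h : IsTrueTwin G Gl Gr) (hP : P G) : FromDecompTree P G
  | ftwin (G Gl Gr : TSGraph α) (hl : FromDecompTree P Gl) (hr : FromDecompTree P Gr)
      (h : IsFalseTwin G Gl Gr) (hP : P G) : FromDecompTree P G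
  | attach (G Gl Gr : TSGraph α) (hl : FromDecompTree P Gl) (hr : FromDecompTree P Gr)
      (h : IsAttach G Gl Gr) (hP : P G) : FromDecompTree P G

end TSGraph

/-!
An admissible set of `G = Gl ⊗ Gr` for `k` splits into admissible sets of `Gl` and `Gr` for `i`
and `j` with `k = i + j - 2m`, where `m` is the number of its matching edges joining the two
twin sets; conversely, since `TS(Gl)` and `TS(Gr)` are completely joined, `m` unmatched twin
vertices on each side can be matched across. Hence `min(G) = min(Gl) + min(Gr)`, and the indices
`k` attaining `min(G)` are exactly the `i + j - 2m` with `i`, `j` attaining `min(Gl)`, `min(Gr)`.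
A perfect matching has even order, so `γ_k ≡ k (mod 2)`, and with Equation (2) the optimal
indices of `Gl` and `Gr` are `α, α + 2, …, β`; `α(G)` is then an elementary minimum.
-/

open Finset

namespace TSGraph

variable {α : Type*}

lemma IsPM.mono {G H : TSGraph α} {T : Finset α} {f : α → α}
    (hHG : ∀ u v, H.Adj u v → G.Adj u v) (hf : H.IsPM T f) : G.IsPM T f :=
  fun v hv => ⟨(hf v hv).1, hHG _ _ (hf v hv).2.1, (hf v hv).2.2⟩

variable [DecidableEq α]

section Matching

variable {G : TSGraph α} {S T A B : Finset α} {f g : α → α}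

lemma IsPM.even_card (hf : G.IsPM T f) : Even #T := by
  -- `T` is partitioned into the fibres `{v, f v}` of `v ↦ s(v, f v)`
  have hfiber : ∀ v ∈ T, {a ∈ T | s(a, f a) = s(v, f v)} = {v, f v} := by
    intro v hv
    ext a
    simp only [mem_filter, mem_insert, mem_singleton, Sym2.eq_iff]
    constructor
    · rintro ⟨-, ⟨rfl, -⟩ | ⟨rfl, -⟩⟩ <;> simp
    · rintro (rfl | rfl)
      · simp [hv]
      · exact ⟨(hf v hv).1, Or.inr ⟨rfl, (hf v hv).2.2⟩⟩
  rw [card_eq_sum_card_image (fun v => s(v, f v)) T, sum_congr rfl (g := fun _ => 2)]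
  · simp [even_two.mul_left]
  · intro e he
    obtain ⟨v, hv, rfl⟩ := mem_image.1 he
    have hne : v ≠ f v := fun he => G.irrefl v (by simpa [← he] using (hf v hv).2.1)
    rw [hfiber v hv, card_pair hne]

lemma IsPM.union (hf : G.IsPM S f) (hg : G.IsPM T g) (hST : Disjoint S T) :
    G.IsPM (S ∪ T) (fun v => if v ∈ S then f v else g v) := by
  intro v hv
  by_cases hvS : v ∈ S
  · obtain ⟨h1, h2, h3⟩ := hf v hvS
    simp [hvS, h1, h2, h3]
  · obtain ⟨h1, h2, h3⟩ := hg v ((mem_union.1 hv).resolve_left hvS)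
    simp [hvS, disjoint_right.1 hST h1, h1, h2, h3]

lemma isPM_pair {a b : α} (hab : G.Adj a b) : G.IsPM {a, b} (Equiv.swap a b) := by
  intro v hv
  rcases mem_insert.1 hv with rfl | hv
  · simp [hab]
  · rw [mem_singleton.1 hv]
    simp [G.symm _ _ hab]

lemma exists_isPM_of_forall_adj (hAB : Disjoint A B) (hcard : #A = #B)
    (hadj : ∀ a ∈ A, ∀ b ∈ B, G.Adj a b) : ∃ f, G.IsPM (A ∪ B) f := by
  induction A using Finset.induction_on generalizing B with
  | empty =>
    rw [card_empty, eq_comm, card_eq_zero] at hcard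
    exact ⟨id, by simp [hcard, IsPM]⟩
  | insert a A ha ih =>
    obtain ⟨b, hb⟩ : B.Nonempty :=
      card_pos.1 (by rw [← hcard, card_insert_of_notMem ha]; omega)
    obtain ⟨f, hf⟩ :=
      ih (B := B.erase b) ((disjoint_insert_left.1 hAB).2.mono_right (erase_subset _ _))
      (by rw [card_erase_of_mem hb, ← hcard, card_insert_of_notMem ha]; omega)
      (fun a' ha' b' hb' => hadj a' (mem_insert_of_mem ha') b' (mem_of_mem_erase hb'))
    have hdisj : Disjoint {a, b} (A ∪ B.erase b) := by
      simp [disjoint_left, ha, (disjoint_insert_left.1 hAB).1,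
        disjoint_right.1 (disjoint_insert_left.1 hAB).2 hb]
    have hsplit : insert a A ∪ B = {a, b} ∪ (A ∪ B.erase b) := by
      ext v
      simp only [mem_union, mem_insert, mem_singleton, mem_erase]
      by_cases hv : v = b <;> simp [hv, hb, or_assoc]
    rw [hsplit]
    exact ⟨_, (isPM_pair (hadj a (mem_insert_self a A) b hb)).union hf hdisj⟩

lemma IsPM.card_filter_le (hf : G.IsPM T f) (A B : Finset α) :
    #{v ∈ T | v ∈ A ∧ f v ∈ B} ≤ #{v ∈ T | v ∈ B ∧ f v ∈ A} := by
  refine card_le_card_of_injOn f (fun v hv => ?_) (fun u hu v hv huv => ?_)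
  · obtain ⟨hvT, hvA, hfvB⟩ := mem_filter.1 hv
    obtain ⟨h1, -, h3⟩ := hf v hvT
    exact mem_filter.2 ⟨h1, hfvB, h3.symm ▸ hvA⟩
  · rw [← (hf u (mem_filter.1 hu).1).2.2, ← (hf v (mem_filter.1 hv).1).2.2, huv]

end Matching

section Gamma

variable {G : TSGraph α} {S : Finset α} {k : ℕ}

lemma Adm.card_mod_two (h : G.Adm k S) : #S % 2 = k % 2 := by
  obtain ⟨-, -, X, hX, rfl, f, hf⟩ := h
  have := card_sdiff_add_card_eq_card (hX.trans inter_subset_left)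
  have := Nat.even_iff.1 hf.even_card
  omega

lemma Adm.le_card_TS (h : G.Adm k S) : k ≤ #G.TS := by
  obtain ⟨-, -, X, hX, rfl, -⟩ := h
  exact card_le_card (hX.trans inter_subset_right)

lemma AllDkNonempty.exists_adm (h : G.AllDkNonempty) (hk : k ≤ #G.TS) : ∃ S, G.Adm k S :=
  (h k hk).imp fun _ hS => hS.1

lemma gamma_le_card (h : G.Adm k S) : G.gamma k ≤ #S :=
  Nat.sInf_le ⟨S, h, rfl⟩

lemma exists_adm_card_eq_gamma (h : ∃ S, G.Adm k S) : ∃ S, G.Adm k S ∧ #S = G.gamma k := by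
  obtain ⟨S, hS⟩ := h
  exact Nat.sInf_mem (s := {n | ∃ S, G.Adm k S ∧ #S = n}) ⟨#S, S, hS, rfl⟩

lemma gamma_mod_two (h : ∃ S, G.Adm k S) : G.gamma k % 2 = k % 2 := by
  obtain ⟨S, hS, hcard⟩ := exists_adm_card_eq_gamma h
  exact hcard ▸ hS.card_mod_two

lemma minVal_le_gamma (hk : k ≤ #G.TS) : G.minVal ≤ G.gamma k :=
  Nat.sInf_le ⟨k, hk, rfl⟩

def optIndices (G : TSGraph α) : Set ℕ := {k | k ≤ #G.TS ∧ G.gamma k = G.minVal}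

lemma optIndices_nonempty : G.optIndices.Nonempty := by
  obtain ⟨k, hk, hmin⟩ :=
    Nat.sInf_mem (s := {n | ∃ k ≤ #G.TS, G.gamma k = n}) ⟨_, 0, Nat.zero_le _, rfl⟩
  exact ⟨k, hk, hmin⟩

lemma bddAbove_optIndices : BddAbove G.optIndices :=
  ⟨#G.TS, fun _ hk => hk.1⟩

lemma alphaVal_mem_optIndices : G.alphaVal ∈ G.optIndices :=
  Nat.sInf_mem optIndices_nonempty

lemma betaVal_mem_optIndices : G.betaVal ∈ G.optIndices :=
  Nat.sSup_mem optIndices_nonempty bddAbove_optIndices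

lemma alphaVal_le (hk : k ∈ G.optIndices) : G.alphaVal ≤ k :=
  Nat.sInf_le hk

lemma le_betaVal (hk : k ∈ G.optIndices) : k ≤ G.betaVal :=
  le_csSup bddAbove_optIndices hk

def parityInterval (a b : ℕ) : Set ℕ := {i | a ≤ i ∧ i ≤ b ∧ i % 2 = a % 2}

/-- Since `|S| ≡ k (mod 2)` for admissible `S`, optimal indices share the parity of `α`;
Equation (2) supplies the converse. -/
lemma optIndices_eq_parityInterval (hA : ∀ k ≤ #G.TS, ∃ S, G.Adm k S) (h2 : G.Eq2Holds) :
    G.optIndices = parityInterval G.alphaVal G.betaVal := by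
  ext k
  constructor
  · intro hk
    have hα := alphaVal_mem_optIndices (G := G)
    have hpk := gamma_mod_two (hA k hk.1)
    have hpα := gamma_mod_two (hA _ hα.1)
    rw [hk.2] at hpk
    rw [hα.2] at hpα
    exact ⟨alphaVal_le hk, le_betaVal hk, by omega⟩
  · rintro ⟨hαk, hkβ, hpar⟩
    have hk : k ≤ #G.TS := hkβ.trans betaVal_mem_optIndices.1
    refine ⟨hk, ?_⟩
    rcases hαk.eq_or_lt with rfl | hαk
    · exact alphaVal_mem_optIndices.2
    rcases hkβ.eq_or_lt with rfl | hkβ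
    · exact betaVal_mem_optIndices.2
    exact (h2 k hk).2.2.1 hαk hkβ (Nat.even_iff.2 (by omega))

end Gamma

/-- The indices `i + j - 2m` obtained by matching `m` of `i` unmatched twin vertices on one side
with `m` of `j` on the other. -/
def pairOff (I J : Set ℕ) : Set ℕ :=
  {k | ∃ i ∈ I, ∃ j ∈ J, ∃ m ≤ i, m ≤ j ∧ k = i + j - 2 * m}

lemma isLeast_pairOff_parityInterval {al bl ar br : ℕ} (hl : al ≤ bl) (hr : ar ≤ br)
    (hpl : bl % 2 = al % 2) (hpr : br % 2 = ar % 2) :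
    IsLeast (pairOff (parityInterval al bl) (parityInterval ar br))
      (if br < al then al - br else if bl < ar then ar - bl else (al + ar) % 2) := by
  refine ⟨?_, ?_⟩
  · split_ifs with h₁ h₂
    · exact ⟨al, ⟨le_rfl, hl, rfl⟩, br, ⟨hr, le_rfl, hpr⟩, br, h₁.le, le_rfl, by omega⟩
    · exact ⟨bl, ⟨hl, le_rfl, hpl⟩, ar, ⟨le_rfl, hr, rfl⟩, bl, le_rfl, h₂.le, by omega⟩
    · rcases le_total ar al with h | h
      · exact ⟨al, ⟨le_rfl, hl, rfl⟩, al - (al + ar) % 2, ⟨by omega, by omega, by omega⟩,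
          al - (al + ar) % 2, by omega, le_rfl, by omega⟩
      · exact ⟨ar - (al + ar) % 2, ⟨by omega, by omega, by omega⟩, ar, ⟨le_rfl, hr, rfl⟩,
          ar - (al + ar) % 2, le_rfl, by omega, by omega⟩
  · rintro k ⟨i, ⟨hli, hil, hpi⟩, j, ⟨hrj, hjr, hpj⟩, m, hmi, hmj, rfl⟩
    split_ifs <;> omega

def Dominates (G : TSGraph α) (S : Finset α) : Prop :=
  ∀ v ∈ G.verts, v ∉ G.TS → v ∈ S ∨ ∃ u ∈ S, G.Adj u v

namespace IsTrueTwin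

variable {G Gl Gr : TSGraph α} {S T : Finset α} {u v : α}

lemma symm (h : IsTrueTwin G Gl Gr) : IsTrueTwin G Gr Gl :=
  ⟨h.1.symm, by rw [h.2.1, union_comm], fun u v => by rw [h.2.2.1]; tauto,
    by rw [h.2.2.2, union_comm]⟩

lemma notMem_right (h : IsTrueTwin G Gl Gr) (hv : v ∈ Gl.verts) : v ∉ Gr.verts :=
  disjoint_left.1 h.1 hv

lemma adj_of_left (h : IsTrueTwin G Gl Gr) (huv : Gl.Adj u v) : G.Adj u v :=
  (h.2.2.1 u v).2 (Or.inl huv)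

lemma adj_of_mem_TS (h : IsTrueTwin G Gl Gr) (hu : u ∈ Gl.TS) (hv : v ∈ Gr.TS) : G.Adj u v :=
  (h.2.2.1 u v).2 (Or.inr (Or.inr (Or.inl ⟨hu, hv⟩)))

lemma adj_cases (h : IsTrueTwin G Gl Gr) (huv : G.Adj u v) (hv : v ∈ Gl.verts) :
    Gl.Adj u v ∨ (u ∈ Gr.TS ∧ v ∈ Gl.TS) := by
  rcases (h.2.2.1 u v).1 huv with h' | h' | h' | h'
  · exact Or.inl h'
  · exact absurd (Gr.adj_mem _ _ h').2 (h.notMem_right hv)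
  · exact absurd (Gr.TS_sub h'.2) (h.notMem_right hv)
  · exact Or.inr h'

lemma mem_TS_of_adj (h : IsTrueTwin G Gl Gr) (huv : G.Adj u v) (hu : u ∈ Gl.verts)
    (hv : v ∈ Gr.verts) : u ∈ Gl.TS :=
  ((h.adj_cases (G.symm _ _ huv) hu).resolve_left
    fun h' => h.notMem_right (Gl.adj_mem _ _ h').1 hv).2

lemma notMem_TS (h : IsTrueTwin G Gl Gr) (hv : v ∈ Gl.verts) (hvT : v ∉ Gl.TS) :
    v ∉ G.TS := by
  rw [h.2.2.2, mem_union, not_or]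
  exact ⟨hvT, fun h' => h.notMem_right hv (Gr.TS_sub h')⟩

lemma card_TS (h : IsTrueTwin G Gl Gr) : #G.TS = #Gl.TS + #Gr.TS :=
  h.2.2.2 ▸ card_union_of_disjoint (h.1.mono Gl.TS_sub Gr.TS_sub)

lemma card_inter_add_card_inter (h : IsTrueTwin G Gl Gr) (hT : T ⊆ G.verts) :
    #(T ∩ Gl.verts) + #(T ∩ Gr.verts) = #T := by
  rw [← card_union_of_disjoint (h.1.mono inter_subset_right inter_subset_right),
    ← inter_union_distrib_left, inter_eq_left.2 (h.2.1 ▸ hT)]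

lemma dominates_union (h : IsTrueTwin G Gl Gr) {Sl Sr : Finset α} (hl : Gl.Dominates Sl)
    (hr : Gr.Dominates Sr) : G.Dominates (Sl ∪ Sr) := by
  intro v hv hvT
  rw [h.2.2.2, mem_union, not_or] at hvT
  rcases mem_union.1 (h.2.1 ▸ hv) with hv | hv
  · rcases hl v hv hvT.1 with hS | ⟨u, hu, huv⟩
    exacts [Or.inl (mem_union_left _ hS), Or.inr ⟨u, mem_union_left _ hu, h.adj_of_left huv⟩]
  · rcases hr v hv hvT.2 with hS | ⟨u, hu, huv⟩
    exacts [Or.inl (mem_union_right _ hS),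
      Or.inr ⟨u, mem_union_right _ hu, h.symm.adj_of_left huv⟩]

lemma dominates_inter (h : IsTrueTwin G Gl Gr) (hS : G.Dominates S) :
    Gl.Dominates (S ∩ Gl.verts) := by
  intro v hv hvT
  rcases hS v (h.2.1 ▸ mem_union_left _ hv) (h.notMem_TS hv hvT) with hvS | ⟨u, hu, huv⟩
  · exact Or.inl (mem_inter.2 ⟨hvS, hv⟩)
  · have hl : Gl.Adj u v := (h.adj_cases huv hv).resolve_right fun h' => hvT h'.2
    exact Or.inr ⟨u, mem_inter.2 ⟨hu, (Gl.adj_mem _ _ hl).1⟩, hl⟩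


lemma adm_union (h : IsTrueTwin G Gl Gr) {Sl Sr : Finset α} {i j m : ℕ} (hl : Gl.Adm i Sl)
    (hr : Gr.Adm j Sr) (hmi : m ≤ i) (hmj : m ≤ j) : G.Adm (i + j - 2 * m) (Sl ∪ Sr) := by
  obtain ⟨hSl, hdl, Xl, hXl, rfl, fl, hfl⟩ := hl
  obtain ⟨hSr, hdr, Xr, hXr, rfl, fr, hfr⟩ := hr
  obtain ⟨Ml, hMl, hMlc⟩ := exists_subset_card_eq hmi
  obtain ⟨Mr, hMr, hMrc⟩ := exists_subset_card_eq hmj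
  have hLR : Disjoint Sl Sr := h.1.mono hSl hSr
  have hXlS : Xl ⊆ Sl := hXl.trans inter_subset_left
  have hXrS : Xr ⊆ Sr := hXr.trans inter_subset_left
  have hXlT : Xl ⊆ Gl.TS := hXl.trans inter_subset_right
  have hXrT : Xr ⊆ Gr.TS := hXr.trans inter_subset_right
  -- `m` twin vertices left unmatched on each side are matched across the complete join
  obtain ⟨g, hg⟩ := exists_isPM_of_forall_adj (hLR.mono (hMl.trans hXlS) (hMr.trans hXrS))
    (hMlc.trans hMrc.symm) fun a ha b hb => h.adj_of_mem_TS (hXlT (hMl ha)) (hXrT (hMr hb))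
  have hsplit :
      (Sl ∪ Sr) \ ((Xl \ Ml) ∪ (Xr \ Mr)) = ((Sl \ Xl) ∪ (Sr \ Xr)) ∪ (Ml ∪ Mr) := by
    ext v
    have := fun hv : v ∈ Sl => disjoint_left.1 hLR hv
    have := fun hv : v ∈ Xl => hXlS hv
    have := fun hv : v ∈ Xr => hXrS hv
    have := fun hv : v ∈ Ml => hMl hv
    have := fun hv : v ∈ Mr => hMr hv
    simp only [mem_union, mem_sdiff]
    tauto
  have hdisj : Disjoint ((Sl \ Xl) ∪ (Sr \ Xr)) (Ml ∪ Mr) := by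
    simp only [disjoint_union_left, disjoint_union_right]
    exact ⟨⟨disjoint_sdiff_self_left.mono_right hMl,
        hLR.symm.mono sdiff_subset (hMl.trans hXlS)⟩,
      ⟨hLR.mono sdiff_subset (hMr.trans hXrS), disjoint_sdiff_self_left.mono_right hMr⟩⟩
  refine ⟨h.2.1 ▸ union_subset_union hSl hSr, h.dominates_union hdl hdr,
    (Xl \ Ml) ∪ (Xr \ Mr), ?_, ?_, ?_⟩
  · rw [h.2.2.2]
    exact union_subset
      ((sdiff_subset.trans hXl).trans (inter_subset_inter subset_union_left subset_union_left))
      ((sdiff_subset.trans hXr).trans (inter_subset_inter subset_union_right subset_union_right))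
  · rw [card_union_of_disjoint (hLR.mono (sdiff_subset.trans hXlS) (sdiff_subset.trans hXrS)),
      card_sdiff_of_subset hMl, card_sdiff_of_subset hMr]
    omega
  · rw [hsplit]
    exact ⟨_, ((hfl.mono fun _ _ => h.adj_of_left).union (hfr.mono fun _ _ => h.symm.adj_of_left)
      (hLR.mono sdiff_subset sdiff_subset)).union hg hdisj⟩

lemma isPM_filter (h : IsTrueTwin G Gl Gr) {f : α → α} (hf : G.IsPM T f) :
    Gl.IsPM {v ∈ T | v ∈ Gl.verts ∧ f v ∈ Gl.verts} f := by
  intro v hv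
  obtain ⟨hvT, hvl, hfvl⟩ := mem_filter.1 hv
  obtain ⟨h1, h2, h3⟩ := hf v hvT
  exact ⟨mem_filter.2 ⟨h1, hfvl, h3.symm ▸ hvl⟩,
    (h.adj_cases h2 hfvl).resolve_right fun h' => h.notMem_right hvl (Gr.TS_sub h'.1), h3⟩

/-- The restriction of `S` to `Gl` is admissible once the vertices matched across are added
to the unmatched ones. -/
lemma adm_inter (h : IsTrueTwin G Gl Gr) {X : Finset α} {f : α → α} (hSV : S ⊆ G.verts)
    (hS : G.Dominates S) (hX : X ⊆ S ∩ G.TS) (hf : G.IsPM (S \ X) f) :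
    Gl.Adm (#(X ∩ Gl.verts) + #{v ∈ S \ X | v ∈ Gl.verts ∧ f v ∈ Gr.verts})
      (S ∩ Gl.verts) := by
  set C := {v ∈ S \ X | v ∈ Gl.verts ∧ f v ∈ Gr.verts}
  have hCT : C ⊆ Gl.TS := fun v hv => by
    obtain ⟨hvSX, hvl, hfvr⟩ := mem_filter.1 hv
    exact h.mem_TS_of_adj (hf v hvSX).2.1 hvl hfvr
  have hXT : X ∩ Gl.verts ⊆ Gl.TS := fun v hv => by
    obtain ⟨hvX, hvl⟩ := mem_inter.1 hv
    rcases mem_union.1 (h.2.2.2 ▸ (mem_inter.1 (hX hvX)).2) with hvT | hvT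
    exacts [hvT, absurd (Gr.TS_sub hvT) (h.notMem_right hvl)]
  have hrest : (S ∩ Gl.verts) \ ((X ∩ Gl.verts) ∪ C) =
      {v ∈ S \ X | v ∈ Gl.verts ∧ f v ∈ Gl.verts} := by
    ext v
    simp only [C, mem_sdiff, mem_union, mem_inter, mem_filter]
    constructor
    · rintro ⟨⟨hvS, hvl⟩, hvXC⟩
      have hvX : v ∉ X := fun hvX => hvXC (Or.inl ⟨hvX, hvl⟩)
      have hfv := h.2.1 ▸ hSV (mem_sdiff.1 (hf v (mem_sdiff.2 ⟨hvS, hvX⟩)).1).1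
      exact ⟨⟨hvS, hvX⟩, hvl, (mem_union.1 hfv).resolve_right fun hr => hvXC (Or.inr
        ⟨⟨hvS, hvX⟩, hvl, hr⟩)⟩
    · rintro ⟨⟨hvS, hvX⟩, hvl, hfvl⟩
      exact ⟨⟨hvS, hvl⟩, fun hvXC => hvXC.elim (fun hXv => hvX hXv.1)
        fun hC => h.notMem_right hfvl hC.2.2⟩
  refine ⟨inter_subset_right, h.dominates_inter hS, (X ∩ Gl.verts) ∪ C, ?_,
    card_union_of_disjoint ?_, f, hrest ▸ h.isPM_filter hf⟩
  · exact union_subset (subset_inter (inter_subset_inter_right (hX.trans inter_subset_left)) hXT)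
      (subset_inter (fun v hv => mem_inter.2 ⟨(mem_sdiff.1 (mem_filter.1 hv).1).1,
        (mem_filter.1 hv).2.1⟩) hCT)
  · exact disjoint_left.2 fun v hvX hvC => (mem_sdiff.1 (mem_filter.1 hvC).1).2 (mem_inter.1 hvX).1

/-- `m` counts the matching edges between the two sides. -/
lemma exists_adm_inter (h : IsTrueTwin G Gl Gr) {k : ℕ} (hS : G.Adm k S) :
    ∃ i j m, Gl.Adm i (S ∩ Gl.verts) ∧ Gr.Adm j (S ∩ Gr.verts) ∧ m ≤ i ∧ m ≤ j ∧
      k = i + j - 2 * m := by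
  obtain ⟨hSV, hdom, X, hX, rfl, f, hf⟩ := hS
  have hC := le_antisymm (hf.card_filter_le Gl.verts Gr.verts) (hf.card_filter_le Gr.verts Gl.verts)
  have hXsplit := h.card_inter_add_card_inter ((hX.trans inter_subset_left).trans hSV)
  refine ⟨_, _, _, h.adm_inter hSV hdom hX hf, h.symm.adm_inter hSV hdom hX hf,
    Nat.le_add_left _ _, hC ▸ Nat.le_add_left _ _, by omega⟩

lemma gamma_le_add (h : IsTrueTwin G Gl Gr) {i j m : ℕ} (hl : ∃ S, Gl.Adm i S)
    (hr : ∃ S, Gr.Adm j S) (hmi : m ≤ i) (hmj : m ≤ j) :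
    G.gamma (i + j - 2 * m) ≤ Gl.gamma i + Gr.gamma j := by
  obtain ⟨Sl, hSl, hSlc⟩ := exists_adm_card_eq_gamma hl
  obtain ⟨Sr, hSr, hSrc⟩ := exists_adm_card_eq_gamma hr
  calc G.gamma (i + j - 2 * m) ≤ #(Sl ∪ Sr) := gamma_le_card (h.adm_union hSl hSr hmi hmj)
    _ = Gl.gamma i + Gr.gamma j := by
      rw [card_union_of_disjoint (h.1.mono hSl.1 hSr.1), hSlc, hSrc]

lemma exists_gamma_add_le (h : IsTrueTwin G Gl Gr) {k : ℕ} (hk : ∃ S, G.Adm k S) :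
    ∃ i j m, i ≤ #Gl.TS ∧ j ≤ #Gr.TS ∧ m ≤ i ∧ m ≤ j ∧ k = i + j - 2 * m ∧
      Gl.gamma i + Gr.gamma j ≤ G.gamma k := by
  obtain ⟨S, hS, hSc⟩ := exists_adm_card_eq_gamma hk
  obtain ⟨i, j, m, hl, hr, hmi, hmj, hkij⟩ := h.exists_adm_inter hS
  refine ⟨i, j, m, hl.le_card_TS, hr.le_card_TS, hmi, hmj, hkij, ?_⟩
  calc Gl.gamma i + Gr.gamma j ≤ #(S ∩ Gl.verts) + #(S ∩ Gr.verts) :=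
        add_le_add (gamma_le_card hl) (gamma_le_card hr)
    _ = G.gamma k := (h.card_inter_add_card_inter hS.1).trans hSc

lemma exists_adm (h : IsTrueTwin G Gl Gr) (hl : ∀ i ≤ #Gl.TS, ∃ S, Gl.Adm i S)
    (hr : ∀ j ≤ #Gr.TS, ∃ S, Gr.Adm j S) : ∀ k ≤ #G.TS, ∃ S, G.Adm k S := by
  intro k hk
  have hTS := h.card_TS
  obtain ⟨Sl, hSl⟩ := hl (min k #Gl.TS) (min_le_right _ _)
  obtain ⟨Sr, hSr⟩ := hr (k - min k #Gl.TS) (by omega)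
  have hadm := h.adm_union hSl hSr (Nat.zero_le _) (Nat.zero_le _)
  rw [show min k #Gl.TS + (k - min k #Gl.TS) - 2 * 0 = k by omega] at hadm
  exact ⟨_, hadm⟩

lemma minVal_eq (h : IsTrueTwin G Gl Gr) (hl : ∀ i ≤ #Gl.TS, ∃ S, Gl.Adm i S)
    (hr : ∀ j ≤ #Gr.TS, ∃ S, Gr.Adm j S) : G.minVal = Gl.minVal + Gr.minVal := by
  apply le_antisymm
  · obtain ⟨i, hi⟩ := Gl.optIndices_nonempty
    obtain ⟨j, hj⟩ := Gr.optIndices_nonempty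
    have hk : i + j - 2 * min i j ≤ #G.TS := by
      have := h.card_TS; have := hi.1; have := hj.1; omega
    calc G.minVal ≤ G.gamma (i + j - 2 * min i j) := minVal_le_gamma hk
      _ ≤ Gl.gamma i + Gr.gamma j :=
        h.gamma_le_add (hl i hi.1) (hr j hj.1) (min_le_left _ _) (min_le_right _ _)
      _ = Gl.minVal + Gr.minVal := by rw [hi.2, hj.2]
  · obtain ⟨k, hk⟩ := G.optIndices_nonempty
    obtain ⟨i, j, -, hi, hj, -, -, -, hle⟩ := h.exists_gamma_add_le (h.exists_adm hl hr k hk.1)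
    calc Gl.minVal + Gr.minVal ≤ Gl.gamma i + Gr.gamma j :=
          add_le_add (minVal_le_gamma hi) (minVal_le_gamma hj)
      _ ≤ G.gamma k := hle
      _ = G.minVal := hk.2

lemma optIndices_eq (h : IsTrueTwin G Gl Gr)
    (hl : ∀ i ≤ #Gl.TS, ∃ S, Gl.Adm i S) (hr : ∀ j ≤ #Gr.TS, ∃ S, Gr.Adm j S) :
    G.optIndices = pairOff Gl.optIndices Gr.optIndices := by
  have hmin := h.minVal_eq hl hr
  ext k
  constructor
  · rintro ⟨hk, hgk⟩
    obtain ⟨i, j, m, hi, hj, hmi, hmj, hkij, hle⟩ :=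
      h.exists_gamma_add_le (h.exists_adm hl hr k hk)
    have := minVal_le_gamma (G := Gl) hi
    have := minVal_le_gamma (G := Gr) hj
    exact ⟨i, ⟨hi, by omega⟩, j, ⟨hj, by omega⟩, m, hmi, hmj, hkij⟩
  · rintro ⟨i, hi, j, hj, m, hmi, hmj, rfl⟩
    have hk : i + j - 2 * m ≤ #G.TS := by have := h.card_TS; have := hi.1; have := hj.1; omega
    refine ⟨hk, le_antisymm ?_ (minVal_le_gamma hk)⟩
    calc G.gamma (i + j - 2 * m) ≤ Gl.gamma i + Gr.gamma j :=
          h.gamma_le_add (hl i hi.1) (hr j hj.1) hmi hmj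
      _ = G.minVal := by rw [hi.2, hj.2, hmin]

end IsTrueTwin

end TSGraph

open TSGraph in
theorem stmt8_general {α : Type*} [DecidableEq α] (G Gl Gr : TSGraph α)
    (hcomp : IsTrueTwin G Gl Gr)
    (hGl : Gl.AllDkNonempty) (hGr : Gr.AllDkNonempty)
    (hl : Gl.Eq2Holds) (hr : Gr.Eq2Holds) :
    (Gl.alphaVal > Gr.betaVal → G.alphaVal = Gl.alphaVal - Gr.betaVal) ∧
    (Gr.alphaVal > Gl.betaVal → G.alphaVal = Gr.alphaVal - Gl.betaVal) ∧
    (¬ Gl.alphaVal > Gr.betaVal → ¬ Gr.alphaVal > Gl.betaVal →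
      G.alphaVal = ((Gl.alphaVal : ℤ) - (Gr.alphaVal : ℤ)).natAbs % 2) := by
  have hGl' := optIndices_eq_parityInterval (fun _ => hGl.exists_adm) hl
  have hGr' := optIndices_eq_parityInterval (fun _ => hGr.exists_adm) hr
  obtain ⟨hαβl, -, hpl⟩ : Gl.betaVal ∈ parityInterval Gl.alphaVal Gl.betaVal :=
    hGl' ▸ betaVal_mem_optIndices
  obtain ⟨hαβr, -, hpr⟩ : Gr.betaVal ∈ parityInterval Gr.alphaVal Gr.betaVal :=
    hGr' ▸ betaVal_mem_optIndices
  have hα := isLeast_pairOff_parityInterval hαβl hαβr hpl hpr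
  rw [← hGl', ← hGr', ← hcomp.optIndices_eq (fun _ => hGl.exists_adm) fun _ => hGr.exists_adm]
    at hα
  have hαG : G.alphaVal = _ := hα.csInf_eq
  refine ⟨fun _ => ?_, fun _ => ?_, fun _ _ => ?_⟩ <;> rw [hαG] <;> split_ifs <;> omega

open TSGraph in
/-- For a true twin composition `G = Gl ⊗ Gr` with all `D_k`
families nonempty and Equation (2) holding for `Gl` and `Gr`:
`α(G) = α(Gl) − β(Gr)` if `α(Gl) > β(Gr)`; `α(G) = α(Gr) − β(Gl)` if
`α(Gr) > β(Gl)`; otherwise `α(G) = |α(Gl) − α(Gr)| mod 2`. -/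
theorem stmt8 {α : Type*} [DecidableEq α] (G Gl Gr : TSGraph α)
    (hcomp : IsTrueTwin G Gl Gr)
    (hG : G.AllDkNonempty) (hGl : Gl.AllDkNonempty) (hGr : Gr.AllDkNonempty)
    (hl : Gl.Eq2Holds) (hr : Gr.Eq2Holds) :
    (Gl.alphaVal > Gr.betaVal → G.alphaVal = Gl.alphaVal - Gr.betaVal) ∧
    (Gr.alphaVal > Gl.betaVal → G.alphaVal = Gr.alphaVal - Gl.betaVal) ∧
    (¬ Gl.alphaVal > Gr.betaVal → ¬ Gr.alphaVal > Gl.betaVal →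
      G.alphaVal = ((Gl.alphaVal : ℤ) - (Gr.alphaVal : ℤ)).natAbs % 2) :=
  stmt8_general G Gl Gr hcomp hGl hGr hl hr
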